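/- Let G be an infinite, finitely generated group. Then for every finite symmetric generating set Σ of G (with Σ = Σ⁻¹ and identity ∉ Σ), the roundness of the metric space (G, d_Σ), where d_Σ is the word metric associated to Σ, lies in the interval [1, 2]. In other words, the roundness spectrum ρ(G) is contained in [1, 2]. -/

import Mathlib

/-- The set of exponents `q ≥ 1` for which the roundness inequality holds for all
quadruples of points, with respect to the distance function `d`. -/
noncomputable def roundnessSet {X : Type*} (d : X → X → ℝ) : Set ℝ :=
  {q : ℝ | 1 ≤ q ∧ ∀ x00 x01 x10 x11 : X,
    d x00 x11 ^ q + d x01 x10 ^ q ≤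
      d x00 x01 ^ q + d x00 x10 ^ q + d x11 x01 ^ q + d x11 x10 ^ q}

/-- The roundness of a distance function `d` on `X`: the supremum (in `EReal`) of all
exponents `q ≥ 1` for which the roundness inequality holds for all quadruples. -/
noncomputable def roundness {X : Type*} (d : X → X → ℝ) : EReal :=
  sSup ((fun q : ℝ => (q : EReal)) '' roundnessSet d)
/-- The word length of `g` with respect to a generating set `S`:
the least `n` such that `g` is a product of `n` elements of `S`. -/
noncomputable def wordLength {G : Type*} [Group G] (S : Set G) (g : G) : ℕ :=
  sInf {n : ℕ | ∃ l : List G, l.length = n ∧ (∀ x ∈ l, x ∈ S) ∧ l.prod = g}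

/-- The word metric on a group `G` associated to a generating set `S`. -/
noncomputable def wordDist {G : Type*} [Group G] (S : Set G) (g h : G) : ℝ :=
  wordLength S (g⁻¹ * h)

/-!
The word metric of a symmetric generating set is a metric, and the triangle inequality alone
gives the roundness inequality for `q = 1`. For the upper bound: as `G` is infinite and `S` finite,
`S ∪ {1}` is not closed under multiplication, so some `s, t ∈ S` have `|st| = 2`. Then `s` is a
midpoint of `1` and `st`, and the quadruple `(1, s, s, st)` forces `2^q ≤ 4`.
-/

section WordLength

variable {G : Type*} [Group G] {S : Set G} {g h : G}

lemma Submonoid.closure_eq_top_of_inv_mem (hsym : ∀ s ∈ S, s⁻¹ ∈ S)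
    (hgen : Subgroup.closure S = ⊤) : Submonoid.closure S = ⊤ := by
  have hinv : S⁻¹ ⊆ S := fun x hx => by simpa using hsym _ hx
  rw [← Set.union_eq_left.mpr hinv, ← Subgroup.closure_toSubmonoid, hgen,
    Subgroup.top_toSubmonoid]

lemma wordLength_prod_le (l : List G) (hl : ∀ x ∈ l, x ∈ S) :
    wordLength S l.prod ≤ l.length :=
  Nat.sInf_le ⟨l, rfl, hl, rfl⟩

lemma exists_list_length_eq_wordLength (hg : g ∈ Submonoid.closure S) :
    ∃ l : List G, l.length = wordLength S g ∧ (∀ x ∈ l, x ∈ S) ∧ l.prod = g := by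
  obtain ⟨l, hl, rfl⟩ := Submonoid.exists_list_of_mem_closure hg
  have hne :
      {n | ∃ m : List G, m.length = n ∧ (∀ x ∈ m, x ∈ S) ∧ m.prod = l.prod}.Nonempty :=
    ⟨_, l, rfl, hl, rfl⟩
  exact Nat.sInf_mem hne

lemma wordLength_one : wordLength S (1 : G) = 0 :=
  Nat.le_zero.mp (wordLength_prod_le [] (by simp))

lemma wordLength_mul_le (hg : g ∈ Submonoid.closure S) (hh : h ∈ Submonoid.closure S) :
    wordLength S (g * h) ≤ wordLength S g + wordLength S h := by
  obtain ⟨l₁, hlen₁, hl₁, rfl⟩ := exists_list_length_eq_wordLength hg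
  obtain ⟨l₂, hlen₂, hl₂, rfl⟩ := exists_list_length_eq_wordLength hh
  rw [← hlen₁, ← hlen₂, ← List.length_append, ← List.prod_append]
  exact wordLength_prod_le _ fun x hx => (List.mem_append.mp hx).elim (hl₁ x) (hl₂ x)

lemma wordLength_inv_le (hsym : ∀ s ∈ S, s⁻¹ ∈ S) (hg : g ∈ Submonoid.closure S) :
    wordLength S g⁻¹ ≤ wordLength S g := by
  obtain ⟨l, hlen, hl, rfl⟩ := exists_list_length_eq_wordLength hg
  rw [← hlen, List.prod_inv_reverse]
  refine (wordLength_prod_le _ fun x hx => ?_).trans_eq (by simp)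
  obtain ⟨y, hy, rfl⟩ := List.mem_map.mp (List.mem_reverse.mp hx)
  exact hsym y (hl y hy)

lemma wordLength_inv (hsym : ∀ s ∈ S, s⁻¹ ∈ S) (hS : Submonoid.closure S = ⊤) (g : G) :
    wordLength S g⁻¹ = wordLength S g :=
  le_antisymm (wordLength_inv_le hsym (by simp [hS])) <| by
    simpa using wordLength_inv_le hsym (by simp [hS] : g⁻¹ ∈ Submonoid.closure S)

lemma wordLength_eq_zero_iff (hg : g ∈ Submonoid.closure S) : wordLength S g = 0 ↔ g = 1 := by
  refine ⟨fun h0 => ?_, fun h1 => h1 ▸ wordLength_one⟩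
  obtain ⟨l, hlen, -, rfl⟩ := exists_list_length_eq_wordLength hg
  rw [h0, List.length_eq_zero_iff] at hlen
  simp [hlen]

lemma wordLength_eq_one_of_mem {s : G} (hs : s ∈ S) (hs1 : s ≠ 1) : wordLength S s = 1 := by
  have hle : wordLength S s ≤ 1 := by simpa using wordLength_prod_le [s] (by simpa using hs)
  have hne : wordLength S s ≠ 0 :=
    (wordLength_eq_zero_iff (Submonoid.subset_closure hs)).not.mpr hs1
  omega

lemma two_le_wordLength (hg : g ∈ Submonoid.closure S) (hgS : g ∉ S) (hg1 : g ≠ 1) :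
    2 ≤ wordLength S g := by
  obtain ⟨l, hlen, hl, rfl⟩ := exists_list_length_eq_wordLength hg
  match l, hlen with
  | [], _ => simp at hg1
  | [x], _ => simp_all
  | _ :: _ :: _, hlen => rw [← hlen]; simp

lemma wordLength_mul_eq_two {s t : G} (hs : s ∈ S) (ht : t ∈ S) (hstS : s * t ∉ S)
    (hst1 : s * t ≠ 1) : wordLength S (s * t) = 2 := by
  have hle : wordLength S (s * t) ≤ 2 := by
    simpa using wordLength_prod_le (S := S) [s, t] (by simp [hs, ht])
  have hmem : s * t ∈ Submonoid.closure S :=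
    mul_mem (Submonoid.subset_closure hs) (Submonoid.subset_closure ht)
  exact le_antisymm hle (two_le_wordLength hmem hstS hst1)

lemma wordDist_self (g : G) : wordDist S g g = 0 := by
  simp [wordDist, wordLength_one]

lemma wordDist_comm (hsym : ∀ s ∈ S, s⁻¹ ∈ S) (hS : Submonoid.closure S = ⊤) (g h : G) :
    wordDist S g h = wordDist S h g := by
  rw [wordDist, wordDist, ← wordLength_inv hsym hS, mul_inv_rev, inv_inv]

lemma wordDist_triangle (hS : Submonoid.closure S = ⊤) (g h k : G) :
    wordDist S g k ≤ wordDist S g h + wordDist S h k := by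
  rw [wordDist, wordDist, wordDist, show g⁻¹ * k = (g⁻¹ * h) * (h⁻¹ * k) by group]
  exact_mod_cast wordLength_mul_le (by simp [hS]) (by simp [hS])

/-- If `S ∪ {1}` were closed under multiplication it would be the whole group. -/
lemma exists_mul_notMem_of_infinite [Infinite G] (hfin : S.Finite)
    (hS : Submonoid.closure S = ⊤) :
    ∃ s ∈ S, ∃ t ∈ S, s * t ∉ S ∧ s * t ≠ 1 := by
  by_contra! hclosed
  have hsub : ∀ g ∈ Submonoid.closure S, g ∈ insert 1 S := fun g hg => by
    induction hg using Submonoid.closure_induction with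
    | mem x hx => exact Or.inr hx
    | one => exact Or.inl rfl
    | mul x y _ _ hx hy =>
      rcases hx with rfl | hx
      · simpa using hy
      rcases hy with rfl | hy
      · simpa using Or.inr hx
      by_cases hxy : x * y ∈ S
      · exact Or.inr hxy
      · exact Or.inl (hclosed x hx y hy hxy)
  exact Set.infinite_univ ((hfin.insert 1).subset fun g _ => hsub g (by simp [hS]))

end WordLength

section Roundness

variable {X : Type*} {d : X → X → ℝ}

lemma one_mem_roundnessSet (hcomm : ∀ x y, d x y = d y x)
    (htri : ∀ x y z, d x z ≤ d x y + d y z) : (1 : ℝ) ∈ roundnessSet d := by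
  refine ⟨le_rfl, fun a b c e => ?_⟩
  simp only [Real.rpow_one]
  linarith [htri a b e, htri a c e, htri b a c, htri b e c, hcomm b e, hcomm c e, hcomm b a]

/-- The quadruple `(a, b, b, c)` gives `(2r)^q ≤ 4 r^q`. -/
lemma le_two_of_mem_roundnessSet_of_midpoint {a b c : X} {r : ℝ} (hr : 0 < r) (hab : d a b = r)
    (hcb : d c b = r) (hac : d a c = 2 * r) (hbb : d b b = 0) {q : ℝ}
    (hq : q ∈ roundnessSet d) : q ≤ 2 := by
  obtain ⟨hq1, hround⟩ := hq
  have h := hround a b b c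
  rw [hab, hcb, hac, hbb, Real.zero_rpow (by linarith), Real.mul_rpow zero_le_two hr.le] at h
  have h4 : (2 : ℝ) ^ q ≤ 2 ^ (2 : ℝ) := by
    rw [Real.rpow_two]
    nlinarith [Real.rpow_pos_of_pos hr q]
  exact (Real.rpow_le_rpow_left_iff one_lt_two).mp h4

lemma roundness_mem_Icc (h1 : (1 : ℝ) ∈ roundnessSet d)
    (h2 : ∀ q ∈ roundnessSet d, q ≤ 2) : roundness d ∈ Set.Icc (1 : EReal) 2 :=
  ⟨le_sSup ⟨1, h1, rfl⟩,
    sSup_le fun _ ⟨q, hq, hx⟩ => hx ▸ EReal.coe_le_coe_iff.mpr (h2 q hq)⟩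

end Roundness

theorem roundness_spectrum_subset_Icc_general (G : Type*) [Group G] [Infinite G]
    (S : Set G) (hfin : S.Finite) (hsym : ∀ s ∈ S, s⁻¹ ∈ S) (h1 : (1 : G) ∉ S)
    (hgen : Subgroup.closure S = ⊤) :
    roundness (wordDist S) ∈ Set.Icc (1 : EReal) 2 := by
  have hS := Submonoid.closure_eq_top_of_inv_mem hsym hgen
  obtain ⟨s, hs, t, ht, hstS, hst1⟩ := exists_mul_notMem_of_infinite hfin hS
  have hne1 : ∀ x ∈ S, x ≠ 1 := fun x hx h => h1 (h ▸ hx)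
  have hd₁ : wordDist S 1 s = 1 := by simp [wordDist, wordLength_eq_one_of_mem hs (hne1 s hs)]
  have hd₂ : wordDist S (s * t) s = 1 := by
    rw [wordDist_comm hsym hS, wordDist, ← mul_assoc, inv_mul_cancel, one_mul,
      wordLength_eq_one_of_mem ht (hne1 t ht), Nat.cast_one]
  have hd₃ : wordDist S 1 (s * t) = 2 * 1 := by
    simp [wordDist, wordLength_mul_eq_two hs ht hstS hst1]
  exact roundness_mem_Icc (one_mem_roundnessSet (wordDist_comm hsym hS) (wordDist_triangle hS))
    fun q => le_two_of_mem_roundnessSet_of_midpoint one_pos hd₁ hd₂ hd₃ (wordDist_self s)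

/-- For an infinite, finitely generated group `G`, the roundness of every Cayley graph
of `G` lies in the interval `[1, 2]`: for every finite symmetric generating set `S`
not containing the identity, the roundness of the word metric `d_S` is in `[1, 2]`. -/
theorem roundness_spectrum_subset_Icc (G : Type*) [Group G] [Infinite G] [Group.FG G]
    (S : Set G) (hfin : S.Finite) (hsym : ∀ s ∈ S, s⁻¹ ∈ S) (h1 : (1 : G) ∉ S)
    (hgen : Subgroup.closure S = ⊤) :
    roundness (wordDist S) ∈ Set.Icc (1 : EReal) 2 :=
  roundness_spectrum_subset_Icc_general G S hfin hsym h1 hgen
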